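/- Projective-to-strict rigidification of Frobenius algebras: if (δ, ε) satisfies associativity, symmetry, right unit and Frobenius laws each up to some phase, and the left unit law exactly, then all four phases are trivial and (δ, ε, δ†, ε†) is a symmetric dagger-Frobenius algebra in fHilb. -/
import Mathlib


open Matrix Kronecker BigOperators

/-- `(ε ⊗ id) ∘ δ`. -/
noncomputable def leftUnit {h : Type*} [Fintype h]
    (δ : Matrix (h × h) h ℂ) (ε : h → ℂ) : Matrix h h ℂ :=
  Matrix.of fun x y => ∑ c, ε c * δ (c, x) y

/-- `(id ⊗ ε) ∘ δ`. -/
noncomputable def rightUnit {h : Type*} [Fintype h]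
    (δ : Matrix (h × h) h ℂ) (ε : h → ℂ) : Matrix h h ℂ :=
  Matrix.of fun x y => ∑ c, ε c * δ (x, c) y

/-- `(δ ⊗ id) ∘ δ`. -/
noncomputable def assocL {h : Type*} [Fintype h] [DecidableEq h]
    (δ : Matrix (h × h) h ℂ) : Matrix ((h × h) × h) h ℂ :=
  (δ ⊗ₖ (1 : Matrix h h ℂ)) * δ

/-- `(id ⊗ δ) ∘ δ`, reassociated to `(H ⊗ H) ⊗ H`. -/
noncomputable def assocR {h : Type*} [Fintype h] [DecidableEq h]
    (δ : Matrix (h × h) h ℂ) : Matrix ((h × h) × h) h ℂ :=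
  Matrix.reindex (Equiv.prodAssoc h h h).symm (Equiv.refl h)
    (((1 : Matrix h h ℂ) ⊗ₖ δ) * δ)

/-- `(δ† ⊗ id) ∘ (id ⊗ δ)`. -/
noncomputable def frobL {h : Type*} [Fintype h] [DecidableEq h]
    (δ : Matrix (h × h) h ℂ) : Matrix (h × h) (h × h) ℂ :=
  (δᴴ ⊗ₖ (1 : Matrix h h ℂ)) *
    Matrix.reindex (Equiv.prodAssoc h h h).symm (Equiv.refl (h × h))
      ((1 : Matrix h h ℂ) ⊗ₖ δ)

/-- `(id ⊗ δ†) ∘ (δ ⊗ id)`. -/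
noncomputable def frobR {h : Type*} [Fintype h] [DecidableEq h]
    (δ : Matrix (h × h) h ℂ) : Matrix (h × h) (h × h) ℂ :=
  ((1 : Matrix h h ℂ) ⊗ₖ δᴴ) *
    Matrix.reindex (Equiv.prodAssoc h h h) (Equiv.refl (h × h))
      (δ ⊗ₖ (1 : Matrix h h ℂ))

section ApplyLemmas
variable {h : Type*} [Fintype h] [DecidableEq h]

lemma assocL_apply (δ : Matrix (h × h) h ℂ) (a b c d : h) :
    assocL δ ((a,b),c) d = ∑ p, δ (a,b) p * δ (p,c) d := by
  simp [assocL, Matrix.mul_apply, Matrix.one_apply, Fintype.sum_prod_type,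
    mul_ite, ite_mul, mul_comm]

lemma assocR_apply (δ : Matrix (h × h) h ℂ) (a b c d : h) :
    assocR δ ((a,b),c) d = ∑ y, δ (b,c) y * δ (a,y) d := by
  simp [assocR, Matrix.mul_apply, Matrix.one_apply, Fintype.sum_prod_type,
    mul_ite, ite_mul, Equiv.prodAssoc]

lemma frobL_apply (δ : Matrix (h × h) h ℂ) (a b c d : h) :
    frobL δ (a,b) (c,d) = ∑ q, star (δ (c,q) a) * δ (q,b) d := by
  simp [frobL, Matrix.mul_apply, Matrix.one_apply, Fintype.sum_prod_type,
    mul_ite, ite_mul, Equiv.prodAssoc, Matrix.conjTranspose_apply]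

lemma frobR_apply (δ : Matrix (h × h) h ℂ) (a b c d : h) :
    frobR δ (a,b) (c,d) = ∑ q, star (δ (q,d) b) * δ (a,q) c := by
  simp [frobR, Matrix.mul_apply, Matrix.one_apply, Fintype.sum_prod_type,
    mul_ite, ite_mul, Equiv.prodAssoc, Matrix.conjTranspose_apply]

end ApplyLemmas

section Aux
variable {α : Type*} [Fintype α]

private lemma swapA (f : α → ℂ) (g : α → α → ℂ) (k : α → ℂ) :
    (∑ a, f a * ∑ p, g a p * k p) = ∑ p, (∑ a, f a * g a p) * k p := by
  simp only [Finset.mul_sum, Finset.sum_mul, mul_assoc]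
  exact Finset.sum_comm

private lemma swapB (f : α → ℂ) (g : α → α → ℂ) (k : α → ℂ) :
    (∑ a, f a * ∑ y, k y * g a y) = ∑ y, k y * ∑ a, f a * g a y := by
  simp only [Finset.mul_sum]
  rw [Finset.sum_comm]
  exact Finset.sum_congr rfl fun y _ => Finset.sum_congr rfl fun a _ => by ring

private lemma swapC (A : α → ℂ) (B : α → α → ℂ) (C : α → ℂ) :
    (∑ q, A q * ∑ d, B q d * C d) = ∑ d, C d * ∑ q, A q * B q d := by
  simp only [Finset.mul_sum]
  rw [Finset.sum_comm]
  exact Finset.sum_congr rfl fun d _ => Finset.sum_congr rfl fun q _ => by ring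

end Aux

/-- Projective-to-strict rigidification: if `(δ, ε)` satisfies associativity,
symmetry, the right unit law and the Frobenius law each up to a phase of
modulus 1, and the left unit law exactly, then all four phases are trivial and
`(δ, ε, δ†, ε†)` is a symmetric dagger-Frobenius algebra in `fHilb`. -/
theorem stmt11 {h : Type*} [Fintype h] [DecidableEq h] [Nonempty h]
    (δ : Matrix (h × h) h ℂ) (ε : h → ℂ)
    (za zs zr zf : ℂ)
    (hza : ‖za‖ = 1) (hzs : ‖zs‖ = 1) (hzr : ‖zr‖ = 1) (hzf : ‖zf‖ = 1)
    (hlu : leftUnit δ ε = 1)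
    (hassoc : assocL δ = za • assocR δ)
    (hsymm : (fun p : h × h => (δ *ᵥ fun x => star (ε x)) (p.2, p.1))
      = zs • (δ *ᵥ fun x => star (ε x)))
    (hru : rightUnit δ ε = zr • (1 : Matrix h h ℂ))
    (hfrob : frobL δ = zf • frobR δ) :
    za = 1 ∧ zs = 1 ∧ zr = 1 ∧ zf = 1 ∧
    assocL δ = assocR δ ∧
    rightUnit δ ε = 1 ∧
    (fun p : h × h => (δ *ᵥ fun x => star (ε x)) (p.2, p.1))
      = (δ *ᵥ fun x => star (ε x)) ∧
    frobL δ = frobR δ := by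
  -- entrywise hypotheses
  have h1 : ∀ x y, (∑ c, ε c * δ (c,x) y) = if x = y then 1 else 0 := by
    intro x y
    have := congrFun (congrFun hlu x) y
    simpa [leftUnit, Matrix.one_apply] using this
  have hR : ∀ x y, (∑ c, ε c * δ (x,c) y) = zr * if x = y then 1 else 0 := by
    intro x y
    have := congrFun (congrFun hru x) y
    simpa [rightUnit, Matrix.one_apply, Matrix.smul_apply, smul_eq_mul, mul_ite, mul_one,
      mul_zero] using this
  have hA : ∀ a b c d, (∑ p, δ (a,b) p * δ (p,c) d)
      = za * ∑ y, δ (b,c) y * δ (a,y) d := by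
    intro a b c d
    have := congrFun (congrFun hassoc ((a,b),c)) d
    rw [assocL_apply, Matrix.smul_apply, assocR_apply] at this
    simpa using this
  set v : h → h → ℂ := fun a b => ∑ c, δ (a,b) c * star (ε c) with hv
  have hS : ∀ a b, v b a = zs * v a b := by
    intro a b
    have := congrFun hsymm (a,b)
    simpa [Matrix.mulVec, dotProduct, hv] using this
  have hF : ∀ a b c d, (∑ q, star (δ (c,q) a) * δ (q,b) d)
      = zf * ∑ q, star (δ (q,d) b) * δ (a,q) c := by
    intro a b c d
    have := congrFun (congrFun hfrob (a,b)) (c,d)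
    rw [frobL_apply, Matrix.smul_apply, frobR_apply] at this
    simpa using this
  -- a nonzero entry of δ
  obtain ⟨x⟩ := ‹Nonempty h›
  have hone : (∑ c, ε c * δ (c,x) x) = 1 := by rw [h1]; simp
  have hne : ∃ c, ε c * δ (c,x) x ≠ 0 := by
    by_contra hcon
    push_neg at hcon
    rw [Finset.sum_eq_zero (fun c _ => hcon c)] at hone
    exact one_ne_zero (α := ℂ) hone.symm
  obtain ⟨c₀, hc₀⟩ := hne
  have hεne : ε c₀ ≠ 0 := fun H => hc₀ (by rw [H, zero_mul])
  have hδne : δ (c₀, x) x ≠ 0 := fun H => hc₀ (by rw [H, mul_zero])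
  -- contraction lemmas
  have key : ∀ (b : h) (f : h → ℂ), (∑ a, ε a * ∑ p, δ (a,b) p * f p) = f b := by
    intro b f
    rw [swapA]
    simp [h1, ite_mul]
  have key2 : ∀ (d : h) (f : h → ℂ), (∑ a, ε a * ∑ y, f y * δ (a,y) d) = f d := by
    intro d f
    rw [swapB]
    simp [h1, mul_ite]
  -- za = 1
  have e1 : ∀ b c d, δ (b,c) d = za * δ (b,c) d := by
    intro b c d
    calc δ (b,c) d
        = ∑ a, ε a * ∑ p, δ (a,b) p * δ (p,c) d :=
          (key b (fun p => δ (p,c) d)).symm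
      _ = ∑ a, ε a * (za * ∑ y, δ (b,c) y * δ (a,y) d) :=
          Finset.sum_congr rfl fun a _ => by rw [hA]
      _ = za * ∑ a, ε a * ∑ y, δ (b,c) y * δ (a,y) d := by
          rw [Finset.mul_sum]
          exact Finset.sum_congr rfl fun a _ => by ring
      _ = za * δ (b,c) d := by rw [key2 d (fun y => δ (b,c) y)]
  have hza1 : za = 1 := by
    have h' := e1 c₀ x x
    nth_rewrite 1 [show δ (c₀,x) x = 1 * δ (c₀,x) x by ring] at h'
    exact (mul_right_cancel₀ hδne h').symm
  -- zr = 1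
  have keyR : ∀ (a : h) (f : h → ℂ), (∑ b, ε b * ∑ p, δ (a,b) p * f p) = zr * f a := by
    intro a f
    rw [swapA]
    simp only [hR, ite_mul, one_mul, zero_mul, mul_ite, mul_zero, mul_one]
    rw [Finset.sum_ite_eq]
    simp
  have e2 : ∀ a c d, zr * δ (a,c) d = δ (a,c) d := by
    intro a c d
    calc zr * δ (a,c) d
        = ∑ b, ε b * ∑ p, δ (a,b) p * δ (p,c) d :=
          (keyR a (fun p => δ (p,c) d)).symm
      _ = ∑ b, ε b * (za * ∑ y, δ (b,c) y * δ (a,y) d) :=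
          Finset.sum_congr rfl fun b _ => by rw [hA]
      _ = ∑ b, ε b * ∑ y, δ (b,c) y * δ (a,y) d := by
          simp [hza1]
      _ = ∑ y, (∑ b, ε b * δ (b,c) y) * δ (a,y) d := swapA _ _ _
      _ = δ (a,c) d := by simp [h1, ite_mul]
  have hzr1 : zr = 1 := by
    have h' := e2 c₀ x x
    nth_rewrite 2 [show δ (c₀,x) x = 1 * δ (c₀,x) x by ring] at h'
    exact mul_right_cancel₀ hδne h'
  -- zs = 1
  have contrS : ∀ b, (∑ a, ε a * v a b) = star (ε b) := by
    intro b
    calc (∑ a, ε a * ∑ co, δ (a,b) co * star (ε co))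
        = ∑ co, (∑ a, ε a * δ (a,b) co) * star (ε co) := swapA _ _ _
      _ = star (ε b) := by simp [h1, ite_mul]
  have contrS2 : ∀ b, (∑ a, ε a * v b a) = star (ε b) := by
    intro b
    calc (∑ a, ε a * ∑ co, δ (b,a) co * star (ε co))
        = ∑ co, (∑ a, ε a * δ (b,a) co) * star (ε co) := swapA _ _ _
      _ = star (ε b) := by simp [hR, hzr1, ite_mul]
  have hzs1 : zs = 1 := by
    have h' : star (ε c₀) = zs * star (ε c₀) := by
      calc star (ε c₀) = ∑ a, ε a * v c₀ a := (contrS2 c₀).symm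
        _ = ∑ a, ε a * (zs * v a c₀) := Finset.sum_congr rfl fun a _ => by rw [hS]
        _ = zs * ∑ a, ε a * v a c₀ := by
            rw [Finset.mul_sum]; exact Finset.sum_congr rfl fun a _ => by ring
        _ = zs * star (ε c₀) := by rw [contrS]
    have hsε : star (ε c₀) ≠ 0 := star_ne_zero.2 hεne
    nth_rewrite 1 [show star (ε c₀) = 1 * star (ε c₀) by ring] at h'
    exact (mul_right_cancel₀ hsε h').symm
  -- zf = 1
  have eq2 : ∀ a b cc, (∑ q, star (δ (cc,q) a) * v q b) = zf * δ (a,b) cc := by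
    intro a b cc
    calc (∑ q, star (δ (cc,q) a) * v q b)
        = ∑ d, star (ε d) * ∑ q, star (δ (cc,q) a) * δ (q,b) d :=
          swapC (fun q => star (δ (cc,q) a)) (fun q d => δ (q,b) d) (fun d => star (ε d))
      _ = ∑ d, star (ε d) * (zf * ∑ q, star (δ (q,d) b) * δ (a,q) cc) :=
          Finset.sum_congr rfl fun d _ => by rw [hF]
      _ = zf * ∑ d, star (ε d) * ∑ q, star (δ (q,d) b) * δ (a,q) cc := by
          rw [Finset.mul_sum]; exact Finset.sum_congr rfl fun d _ => by ring
      _ = zf * ∑ q, (∑ d, star (ε d) * star (δ (q,d) b)) * δ (a,q) cc := by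
          rw [swapA]
      _ = zf * ∑ q, (if q = b then (1:ℂ) else 0) * δ (a,q) cc := by
          congr 1
          refine Finset.sum_congr rfl fun q _ => ?_
          congr 1
          simp only [← star_mul']
          rw [← star_sum, hR q b, hzr1, one_mul]
          simp [apply_ite]
      _ = zf * δ (a,b) cc := by
          congr 1
          simp [ite_mul]
  have hzf1 : zf = 1 := by
    have hstarv : ∀ q, star (v x q) = ∑ a, ε a * star (δ (x,q) a) := by
      intro q
      simp only [hv]
      rw [star_sum]
      exact Finset.sum_congr rfl fun a _ => by
        rw [star_mul', star_star]; ring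
    have E : (∑ q, star (v x q) * v q x) = zf := by
      calc (∑ q, star (v x q) * v q x)
          = ∑ q, (∑ a, ε a * star (δ (x,q) a)) * v q x := by
            exact Finset.sum_congr rfl fun q _ => by rw [hstarv q]
          _ = ∑ a, ε a * ∑ q, star (δ (x,q) a) * v q x := (swapA _ _ _).symm
          _ = ∑ a, ε a * (zf * δ (a,x) x) :=
            Finset.sum_congr rfl fun a _ => by rw [eq2]
          _ = zf * ∑ a, ε a * δ (a,x) x := by
            rw [Finset.mul_sum]; exact Finset.sum_congr rfl fun a _ => by ring
          _ = zf := by rw [h1 x x]; simp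
    have Esym : (∑ q, star (v x q) * v x q) = zf := by
      rw [← E]
      exact Finset.sum_congr rfl fun q _ => by rw [hS x q, hzs1, one_mul]
    have hreal : ((∑ q, Complex.normSq (v x q) : ℝ) : ℂ) = zf := by
      rw [← Esym]
      push_cast
      exact Finset.sum_congr rfl fun q _ => by
        rw [Complex.normSq_eq_conj_mul_self]; rfl
    set r : ℝ := ∑ q, Complex.normSq (v x q) with hr
    have hrnonneg : 0 ≤ r := Finset.sum_nonneg fun q _ => Complex.normSq_nonneg _
    have hrabs : |r| = 1 := by
      have := hzf
      rw [← hreal] at this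
      simpa [Complex.norm_real] using this
    have hr1 : r = 1 := by
      rwa [abs_of_nonneg hrnonneg] at hrabs
    rw [← hreal, hr1]
    norm_num
  refine ⟨hza1, hzs1, hzr1, hzf1, ?_, ?_, ?_, ?_⟩
  · rw [hassoc, hza1, one_smul]
  · rw [hru, hzr1, one_smul]
  · rw [hsymm, hzs1, one_smul]
  · rw [hfrob, hzf1, one_smul]
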